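/- arXiv:1502.05832 — 2 statements merged into one kernel-verified Lean document; each statement's English description precedes it below -/
import Mathlib

section
/- Fix a ∈ ℝ, λ > 0, and p⁰, q₀ ∈ (0,1). Define f(q) = (1−q)·log((1−q)/(1−p⁰)) + q·log(q/p⁰) and l(q,q₀) = q·log(q/q₀) + (1−q)·log((1−q)/(1−q₀)). Then the function h(q) = a·q + f(q) + λ·l(q,q₀) on (0,1) is strictly convex and attains its unique minimum at the point q* = 1 / (1 + exp( (1/(1+λ)) · [ a + log((1−p⁰)/p⁰) + λ·log((1−q₀)/q₀) ] )). -/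
/-!
Both `f` and `l` are Bernoulli Kullback–Leibler divergences `q ↦ KL(q ‖ p)`, whose derivative in
`q` is `logit q - logit p`. Hence `h' q = a - logit p⁰ - λ logit q₀ + (1 + λ) logit q`, and `q*` is
exactly the point where this vanishes, since `1 / (1 + exp t)` is the inverse of `logit` at `-t`.
So `h' q = (1 + λ) (logit q - logit q*)`, which is strictly increasing: `h` is strictly convex with
a critical point at `q*`, its unique minimiser.
-/

open Real Set

noncomputable def logit (x : ℝ) : ℝ := log (x / (1 - x))

noncomputable def bernoulliKL (q p : ℝ) : ℝ :=
  q * log (q / p) + (1 - q) * log ((1 - q) / (1 - p))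

lemma hasDerivAt_mul_log_div {c x : ℝ} (hc : c ≠ 0) (hx : x ≠ 0) :
    HasDerivAt (fun y => y * log (y / c)) (log (x / c) + 1) x := by
  have hsplit : (fun y => y * log (y / c)) = fun y => y * log y - y * log c := by
    funext y
    rcases eq_or_ne y 0 with rfl | hy
    · simp
    · rw [log_div hy hc]; ring
  rw [hsplit]
  exact ((hasDerivAt_mul_log hx).sub ((hasDerivAt_id x).mul_const (log c))).congr_deriv
    (by rw [log_div hx hc]; ring)

lemma hasDerivAt_bernoulliKL {p q : ℝ} (hp : p ∈ Ioo 0 1) (hq : q ∈ Ioo 0 1) :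
    HasDerivAt (fun x => bernoulliKL x p) (logit q - logit p) q := by
  have hp₁ : 1 - p ≠ 0 := sub_ne_zero.2 hp.2.ne'
  have hq₁ : 1 - q ≠ 0 := sub_ne_zero.2 hq.2.ne'
  have := (hasDerivAt_mul_log_div hp.1.ne' hq.1.ne').add
    ((hasDerivAt_mul_log_div hp₁ hq₁).comp q ((hasDerivAt_id q).const_sub 1))
  refine this.congr_deriv ?_
  simp only [logit, log_div hq.1.ne' hp.1.ne', log_div hq₁ hp₁, log_div hq.1.ne' hq₁,
    log_div hp.1.ne' hp₁]
  ring

lemma strictMonoOn_logit : StrictMonoOn logit (Ioo 0 1) := by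
  intro x hx y hy hxy
  have hx₁ : 0 < 1 - x := sub_pos.2 hx.2
  have hy₁ : 0 < 1 - y := sub_pos.2 hy.2
  refine log_lt_log (div_pos hx.1 hx₁) ?_
  rw [div_lt_div_iff₀ hx₁ hy₁]
  nlinarith

lemma logit_neg_eq_log_div (p : ℝ) : -logit p = log ((1 - p) / p) := by
  rw [logit, ← log_inv, inv_div]

lemma one_div_one_add_exp_mem_Ioo (t : ℝ) : 1 / (1 + exp t) ∈ Ioo 0 1 :=
  ⟨by positivity, by rw [div_lt_one (by positivity)]; linarith [exp_pos t]⟩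

lemma logit_one_div_one_add_exp (t : ℝ) : logit (1 / (1 + exp t)) = -t := by
  have : 1 / (1 + exp t) / (1 - 1 / (1 + exp t)) = exp (-t) := by
    rw [exp_neg]
    field_simp
    ring
  rw [logit, this, log_exp]

lemma strictConvexOn_of_hasDerivAt_of_strictMonoOn {S : Set ℝ} {f f' : ℝ → ℝ}
    (hS : Convex ℝ S) (hSo : IsOpen S) (hf : ∀ x ∈ S, HasDerivAt f (f' x) x)
    (hf' : StrictMonoOn f' S) : StrictConvexOn ℝ S f := by
  refine StrictMonoOn.strictConvexOn_of_deriv hS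
    (fun x hx => (hf x hx).continuousAt.continuousWithinAt) ?_
  rw [hSo.interior_eq]
  exact hf'.congr fun x hx => (hf x hx).deriv.symm

lemma StrictConvexOn.lt_of_hasDerivAt_eq_zero {S : Set ℝ} {f : ℝ → ℝ} {x₀ x : ℝ}
    (hf : StrictConvexOn ℝ S f) (hx₀ : x₀ ∈ S) (hx : x ∈ S) (hne : x ≠ x₀)
    (hd : HasDerivAt f 0 x₀) : f x₀ < f x := by
  rcases hne.lt_or_gt with hlt | hgt
  · have := hf.slope_lt_of_hasDerivAt hx hx₀ hlt hd
    rw [slope_def_field, div_lt_iff₀ (sub_pos.2 hlt)] at this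
    linarith
  · have := hf.lt_slope_of_hasDerivAt hx₀ hx hgt hd
    rw [slope_def_field, lt_div_iff₀ (sub_pos.2 hgt)] at this
    linarith

/-- The one-dimensional proximal coordinate objective
`h(q) = a·q + f(q) + λ·l(q,q₀)`, where
`f(q) = (1−q)·log((1−q)/(1−p⁰)) + q·log(q/p⁰)` and
`l(q,q₀) = q·log(q/q₀) + (1−q)·log((1−q)/(1−q₀))`, is strictly convex on
`(0,1)` and attains its unique minimum at
`q* = 1 / (1 + exp((1/(1+λ))·[a + log((1−p⁰)/p⁰) + λ·log((1−q₀)/q₀)]))`. -/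
theorem proximal_update_closed_form
    (a lam p0 q0 : ℝ) (hlam : 0 < lam)
    (hp0 : p0 ∈ Set.Ioo (0 : ℝ) 1) (hq0 : q0 ∈ Set.Ioo (0 : ℝ) 1)
    (f l h : ℝ → ℝ)
    (hf : ∀ q : ℝ, f q =
      (1 - q) * Real.log ((1 - q) / (1 - p0)) + q * Real.log (q / p0))
    (hl : ∀ q : ℝ, l q =
      q * Real.log (q / q0) + (1 - q) * Real.log ((1 - q) / (1 - q0)))
    (hh : ∀ q : ℝ, h q = a * q + f q + lam * l q)
    (qstar : ℝ)
    (hqstar : qstar = 1 / (1 + Real.exp ((1 / (1 + lam)) *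
      (a + Real.log ((1 - p0) / p0) + lam * Real.log ((1 - q0) / q0))))) :
    StrictConvexOn ℝ (Set.Ioo (0 : ℝ) 1) h ∧
    qstar ∈ Set.Ioo (0 : ℝ) 1 ∧
    ∀ q ∈ Set.Ioo (0 : ℝ) 1, q ≠ qstar → h qstar < h q := by
  have hqstar_mem : qstar ∈ Ioo 0 1 := hqstar ▸ one_div_one_add_exp_mem_Ioo _
  have h_eq : h = fun q => a * q + bernoulliKL q p0 + lam * bernoulliKL q q0 :=
    funext fun q => by simp only [hh, hf, hl, bernoulliKL]; ring
  have h_deriv : ∀ q ∈ Ioo 0 1, HasDerivAt h ((1 + lam) * (logit q - logit qstar)) q := by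
    intro q hq
    rw [h_eq]
    refine ((((hasDerivAt_id q).const_mul a).add (hasDerivAt_bernoulliKL hp0 hq)).add
      ((hasDerivAt_bernoulliKL hq0 hq).const_mul lam)).congr_deriv ?_
    rw [hqstar, logit_one_div_one_add_exp, ← logit_neg_eq_log_div, ← logit_neg_eq_log_div]
    field_simp
    ring
  have h_convex : StrictConvexOn ℝ (Ioo 0 1) h :=
    strictConvexOn_of_hasDerivAt_of_strictMonoOn (convex_Ioo 0 1) isOpen_Ioo h_deriv
      fun x hx y hy hxy => mul_lt_mul_of_pos_left
        (sub_lt_sub_right (strictMonoOn_logit hx hy hxy) _) (by linarith)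
  refine ⟨h_convex, hqstar_mem, fun q hq hne => ?_⟩
  exact h_convex.lt_of_hasDerivAt_eq_zero hqstar_mem hq hne
    (by simpa using h_deriv qstar hqstar_mem)
end

section
/- Fix λ > 0, p⁰ ∈ (0,1), and reals Ψ_min ≤ Ψ_max. Define q_min = 1/(1 + exp(Ψ_max − Ψ_min + log((1−p⁰)/p⁰))) and q_max = 1/(1 + exp(Ψ_min − Ψ_max + log((1−p⁰)/p⁰))). Suppose a ∈ [Ψ_min − Ψ_max, Ψ_max − Ψ_min] and q₀ ∈ [q_min, q_max]. Then the updated value q* = 1 / (1 + exp( (1/(1+λ)) · [ a + log((1−p⁰)/p⁰) + λ·log((1−q₀)/q₀) ] )) also lies in [q_min, q_max]. Consequently, if the algorithm is initialized in the box Σ = Π_i [q_i^min, q_i^max], every iterate of the proximal alternate minimization remains in the compact set Σ ⊂ (0,1)^N. -/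
private lemma sig_mono {x y : ℝ} (h : x ≤ y) :
    1 / (1 + Real.exp y) ≤ 1 / (1 + Real.exp x) := by
  apply one_div_le_one_div_of_le
  · positivity
  · linarith [Real.exp_le_exp.mpr h]

private lemma key (c lam : ℝ) (hlam : 0 < lam) (lo hi : ℝ)
    (a : ℝ) (ha : a ∈ Set.Icc lo hi) (q0 : ℝ)
    (hq0 : q0 ∈ Set.Icc (1/(1+Real.exp (hi+c))) (1/(1+Real.exp (lo+c)))) :
    1/(1+Real.exp ((1/(1+lam))*(a + c + lam * Real.log ((1-q0)/q0))))
      ∈ Set.Icc (1/(1+Real.exp (hi+c))) (1/(1+Real.exp (lo+c))) := by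
  obtain ⟨ha1, ha2⟩ := ha
  obtain ⟨hq1, hq2⟩ := hq0
  have Ehi : (0:ℝ) < Real.exp (hi+c) := Real.exp_pos _
  have Elo : (0:ℝ) < Real.exp (lo+c) := Real.exp_pos _
  have hq0pos : 0 < q0 := lt_of_lt_of_le (by positivity) hq1
  have hq0lt : q0 < 1 := by
    have : 1/(1+Real.exp (lo+c)) < 1 := by
      rw [div_lt_one (by positivity)]; linarith
    linarith
  have hrpos : 0 < (1-q0)/q0 := div_pos (by linarith) hq0pos
  have hub : (1-q0)/q0 ≤ Real.exp (hi+c) := by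
    rw [div_le_iff₀ hq0pos]
    have h := mul_le_mul_of_nonneg_left hq1 (le_of_lt (by positivity : (0:ℝ) < 1 + Real.exp (hi+c)))
    rw [mul_one_div, div_self (by positivity : (1:ℝ)+Real.exp (hi+c) ≠ 0)] at h
    nlinarith
  have hlb : Real.exp (lo+c) ≤ (1-q0)/q0 := by
    rw [le_div_iff₀ hq0pos]
    have h := mul_le_mul_of_nonneg_left hq2 (le_of_lt (by positivity : (0:ℝ) < 1 + Real.exp (lo+c)))
    rw [mul_one_div, div_self (by positivity : (1:ℝ)+Real.exp (lo+c) ≠ 0)] at h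
    nlinarith
  have hL1 : Real.log ((1-q0)/q0) ≤ hi + c := by
    rw [Real.log_le_iff_le_exp hrpos]; exact hub
  have hL2 : lo + c ≤ Real.log ((1-q0)/q0) := by
    rw [Real.le_log_iff_exp_le hrpos]; exact hlb
  set L := Real.log ((1-q0)/q0)
  have h1lam : (0:ℝ) < 1 + lam := by linarith
  have hX1 : (1/(1+lam))*(a + c + lam * L) ≤ hi + c := by
    rw [one_div_mul_eq_div, div_le_iff₀ h1lam]; nlinarith
  have hX2 : lo + c ≤ (1/(1+lam))*(a + c + lam * L) := by
    rw [one_div_mul_eq_div, le_div_iff₀ h1lam]; nlinarith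
  exact ⟨sig_mono hX1, sig_mono hX2⟩


/-- With `q_min = 1/(1 + exp(Ψ_max − Ψ_min + log((1−p⁰)/p⁰)))` and
`q_max = 1/(1 + exp(Ψ_min − Ψ_max + log((1−p⁰)/p⁰)))`, the proximal sigmoid
update `q* = 1/(1 + exp((1/(1+λ))·[a + log((1−p⁰)/p⁰) + λ·log((1−q₀)/q₀)]))`
maps `[q_min, q_max]` into itself whenever `a ∈ [Ψ_min − Ψ_max, Ψ_max − Ψ_min]`.
Consequently, a sequence of iterates of the proximal alternate minimization
initialized in the box `Σ = Π_i [q_i^min, q_i^max]` remains in `Σ ⊂ (0,1)^N`. -/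
theorem proximal_iterates_stay_in_box
    (N : ℕ) (hN : 1 ≤ N) (lam : ℝ) (hlam : 0 < lam)
    (Ψmin Ψmax : ℝ) (hΨ : Ψmin ≤ Ψmax)
    (p0 : Fin N → ℝ) (hp0 : ∀ i, p0 i ∈ Set.Ioo (0 : ℝ) 1)
    (qmin qmax : Fin N → ℝ)
    (hqmin : ∀ i, qmin i =
      1 / (1 + Real.exp (Ψmax - Ψmin + Real.log ((1 - p0 i) / p0 i))))
    (hqmax : ∀ i, qmax i =
      1 / (1 + Real.exp (Ψmin - Ψmax + Real.log ((1 - p0 i) / p0 i)))) :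
    (∀ i : Fin N, ∀ a ∈ Set.Icc (Ψmin - Ψmax) (Ψmax - Ψmin),
      ∀ q0 ∈ Set.Icc (qmin i) (qmax i),
        1 / (1 + Real.exp ((1 / (1 + lam)) *
            (a + Real.log ((1 - p0 i) / p0 i) + lam * Real.log ((1 - q0) / q0))))
          ∈ Set.Icc (qmin i) (qmax i)) ∧
    (∀ Q : ℕ → Fin N → ℝ,
      (∀ i, Q 0 i ∈ Set.Icc (qmin i) (qmax i)) →
      (∀ t : ℕ, ∀ i : Fin N,
        ∃ a ∈ Set.Icc (Ψmin - Ψmax) (Ψmax - Ψmin),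
          Q (t + 1) i = 1 / (1 + Real.exp ((1 / (1 + lam)) *
            (a + Real.log ((1 - p0 i) / p0 i) +
              lam * Real.log ((1 - Q t i) / Q t i))))) →
      ∀ t : ℕ, ∀ i : Fin N,
        Q t i ∈ Set.Icc (qmin i) (qmax i) ∧ Q t i ∈ Set.Ioo (0 : ℝ) 1) := by
  have hpos : ∀ i : Fin N, 0 < qmin i := by
    intro i; rw [hqmin i]; positivity
  have hlt1 : ∀ i : Fin N, qmax i < 1 := by
    intro i; rw [hqmax i]
    rw [div_lt_one (by positivity)]
    linarith [Real.exp_pos (Ψmin - Ψmax + Real.log ((1 - p0 i) / p0 i))]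
  have main : ∀ i : Fin N, ∀ a ∈ Set.Icc (Ψmin - Ψmax) (Ψmax - Ψmin),
      ∀ q0 ∈ Set.Icc (qmin i) (qmax i),
        1 / (1 + Real.exp ((1 / (1 + lam)) *
            (a + Real.log ((1 - p0 i) / p0 i) + lam * Real.log ((1 - q0) / q0))))
          ∈ Set.Icc (qmin i) (qmax i) := by
    intro i a ha q0 hq0
    rw [hqmin i, hqmax i] at hq0 ⊢
    exact key (Real.log ((1 - p0 i) / p0 i)) lam hlam (Ψmin - Ψmax) (Ψmax - Ψmin) a ha q0 hq0
  refine ⟨main, ?_⟩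
  intro Q h0 hstep t
  induction t with
  | zero =>
      intro i
      exact ⟨h0 i, lt_of_lt_of_le (hpos i) (h0 i).1, lt_of_le_of_lt (h0 i).2 (hlt1 i)⟩
  | succ t ih =>
      intro i
      obtain ⟨a, ha, hQ⟩ := hstep t i
      have hmem : Q (t+1) i ∈ Set.Icc (qmin i) (qmax i) := by
        rw [hQ]; exact main i a ha (Q t i) (ih i).1
      exact ⟨hmem, lt_of_lt_of_le (hpos i) hmem.1, lt_of_le_of_lt hmem.2 (hlt1 i)⟩
end
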